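/- arXiv:2001.05977 — 4 statements merged into one kernel-verified Lean document; each statement's English description precedes it below -/
import Mathlib

section
/- P(G < N) = (1−ζ) · E[min(N, G+1)], where G < N is the event that the geometric variable G is strictly smaller than N (in the order of ℕ∞), and the expectation is the Lebesgue integral in [0,∞]. (This is the random-variable core of Theorem 2(2): for any fixed strategy, the probability of reaching the target t in the augmented MDP M^ζ equals (1−ζ) times the expected total reward, i.e. the expected number of accepting transitions taken, in the augmented MDP with undiscounted reward.) -/
/-!
Both sides equal `∑ₖ (1 - ζ) ζᵏ P(N > k)`. On the left, condition on `G = k` and use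
independence. On the right, use the tail-sum formula `E[M] = ∑ₖ P(M > k)` for `M = min(N, G+1)`:
the event `M > k` is `{G ≥ k} ∩ {N > k}`, and the geometric tail is `P(G ≥ k) = ζᵏ`.
-/

open MeasureTheory ProbabilityTheory
open scoped ENNReal

/-- `ζ ^ n` for an extended natural number `n`, with the convention `ζ ^ ∞ = 0`. -/
noncomputable def epow (ζ : ℝ≥0∞) (n : ℕ∞) : ℝ≥0∞ :=
  if n = ⊤ then 0 else ζ ^ n.toNat

/-- `∑_{i=0}^{n-1} ζ ^ i` for an extended natural number `n`, where for `n = ∞`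
the sum is interpreted as the full geometric series `1 / (1 - ζ)`. -/
noncomputable def geomSum (ζ : ℝ≥0∞) (n : ℕ∞) : ℝ≥0∞ :=
  if n = ⊤ then (1 - ζ)⁻¹ else ∑ i ∈ Finset.range n.toNat, ζ ^ i

lemma ENat.toENNReal_eq_tsum_indicator (m : ℕ∞) :
    (m : ℝ≥0∞) = ∑' n : ℕ, {n : ℕ | (n : ℕ∞) < m}.indicator (fun _ => 1) n := by
  rw [← tsum_subtype, ENNReal.tsum_set_one]
  congr
  cases m with
  | top => simp [Set.encard_univ]
  | coe k => simp [Set.Nat.encard_range]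

section

variable {Ω : Type*} [MeasurableSpace Ω] (μ : Measure Ω)

theorem lintegral_enat_eq_tsum_measure_lt {f : Ω → ℕ∞} (hf : Measurable f) :
    ∫⁻ ω, (f ω : ℝ≥0∞) ∂μ = ∑' n : ℕ, μ {ω | (n : ℕ∞) < f ω} := by
  have hmeas (n : ℕ) : MeasurableSet {ω | (n : ℕ∞) < f ω} :=
    hf (.of_discrete (s := Set.Ioi (n : ℕ∞)))
  calc ∫⁻ ω, (f ω : ℝ≥0∞) ∂μ
      = ∫⁻ ω, ∑' n : ℕ, {ω | (n : ℕ∞) < f ω}.indicator (fun _ => 1) ω ∂μ := by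
        congr with ω
        simp only [ENat.toENNReal_eq_tsum_indicator, Set.indicator_apply, Set.mem_ofPred_eq]
    _ = ∑' n : ℕ, μ {ω | (n : ℕ∞) < f ω} := by
        rw [lintegral_tsum fun n => (measurable_const.indicator (hmeas n)).aemeasurable]
        exact tsum_congr fun n => lintegral_indicator_one (hmeas n)

theorem measure_preimage_Ici_eq_pow_of_geometric {G : Ω → ℕ} (hG : Measurable G) {ζ : ℝ≥0∞}
    (hζ : ζ < 1)
    (hGeom : ∀ k, μ {ω | G ω = k} = (1 - ζ) * ζ ^ k) (i : ℕ) :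
    μ (G ⁻¹' Set.Ici i) = ζ ^ i := by
  have h1ζ : 1 - ζ ≠ 0 := (tsub_pos_of_lt hζ).ne'
  calc μ (G ⁻¹' Set.Ici i) = μ (G ⁻¹' Set.range (i + ·)) := by
        congr with k
        simp [le_iff_exists_add, eq_comm]
    _ = ∑' b : Set.range (i + ·), μ (G ⁻¹' {b.1}) :=
        (tsum_measure_preimage_singleton (Set.countable_range _)
          fun _ _ => hG (measurableSet_singleton _)).symm
    _ = ∑' j, (1 - ζ) * ζ ^ i * ζ ^ j := by
        rw [tsum_range (fun k => μ (G ⁻¹' {k})) (add_right_injective i)]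
        simp only [Set.preimage, Set.mem_singleton_iff, hGeom, pow_add, mul_assoc]
    _ = ζ ^ i := by
        rw [ENNReal.tsum_mul_left, ENNReal.tsum_geometric, mul_right_comm,
          ENNReal.mul_inv_cancel h1ζ (ENNReal.sub_ne_top ENNReal.one_ne_top), one_mul]

theorem ProbabilityTheory.IndepFun.measure_setOf_mem_eq_tsum {ι β : Type*} [Countable ι]
    [MeasurableSpace ι] [MeasurableSingletonClass ι] [MeasurableSpace β]
    {G : Ω → ι} {N : Ω → β} (hG : Measurable G) (hN : Measurable N) (hIndep : IndepFun G N μ)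
    {t : ι → Set β} (ht : ∀ k, MeasurableSet (t k)) :
    μ {ω | N ω ∈ t (G ω)} = ∑' k, μ (G ⁻¹' {k}) * μ (N ⁻¹' t k) := by
  have hfibers : {ω | N ω ∈ t (G ω)} = ⋃ k, G ⁻¹' {k} ∩ N ⁻¹' t k := by
    ext ω
    simp
  rw [hfibers, measure_iUnion
    (fun a b hab => (pairwise_disjoint_fiber G hab).mono Set.inter_subset_left
      Set.inter_subset_left)
    fun k => (hG (measurableSet_singleton k)).inter (hN (ht k))]
  exact tsum_congr fun k =>
    hIndep.measure_inter_preimage_eq_mul _ _ (measurableSet_singleton k) (ht k)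

end

theorem reach_eq_one_sub_zeta_mul_expected_total_general
    {Ω : Type*} [MeasurableSpace Ω] (μ : Measure Ω)
    (ζ : ℝ≥0∞) (hζ1 : ζ < 1)
    (N : Ω → ℕ∞) (hN : Measurable N)
    (G : Ω → ℕ) (hG : Measurable G)
    (hGeom : ∀ k : ℕ, μ {ω | G ω = k} = (1 - ζ) * ζ ^ k)
    (hIndep : IndepFun G N μ) :
    μ {ω | (G ω : ℕ∞) < N ω} =
      (1 - ζ) * ∫⁻ ω, (↑(min (N ω) ((G ω : ℕ∞) + 1)) : ℝ≥0∞) ∂μ := by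
  have hmin (k : ℕ) : {ω | (k : ℕ∞) < min (N ω) ((G ω : ℕ∞) + 1)}
      = G ⁻¹' Set.Ici k ∩ N ⁻¹' Set.Ioi (k : ℕ∞) := by
    ext ω
    simp [ENat.lt_add_one_iff, and_comm]
  calc μ {ω | (G ω : ℕ∞) < N ω}
      = ∑' k : ℕ, μ (G ⁻¹' {k}) * μ (N ⁻¹' Set.Ioi (k : ℕ∞)) :=
        hIndep.measure_setOf_mem_eq_tsum μ hG hN (t := (Set.Ioi ·)) fun _ => .of_discrete
    _ = (1 - ζ) * ∑' k : ℕ, μ (G ⁻¹' Set.Ici k) * μ (N ⁻¹' Set.Ioi (k : ℕ∞)) := by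
        simp only [measure_preimage_Ici_eq_pow_of_geometric μ hG hζ1 hGeom,
          ← ENNReal.tsum_mul_left, ← mul_assoc, ← hGeom]
        rfl
    _ = (1 - ζ) * ∫⁻ ω, (↑(min (N ω) ((G ω : ℕ∞) + 1)) : ℝ≥0∞) ∂μ := by
        rw [lintegral_enat_eq_tsum_measure_lt μ (by fun_prop)]
        simp only [hmin, hIndep.measure_inter_preimage_eq_mul _ _ .of_discrete .of_discrete]

/-- `P(G < N) = (1 − ζ) · E[min(N, G+1)]` for a geometric `G` independent of `N`. -/
theorem reach_eq_one_sub_zeta_mul_expected_total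
    {Ω : Type*} [MeasurableSpace Ω] (μ : Measure Ω) [IsProbabilityMeasure μ]
    (ζ : ℝ≥0∞) (hζ0 : 0 < ζ) (hζ1 : ζ < 1)
    (N : Ω → ℕ∞) (hN : Measurable N)
    (G : Ω → ℕ) (hG : Measurable G)
    (hGeom : ∀ k : ℕ, μ {ω | G ω = k} = (1 - ζ) * ζ ^ k)
    (hIndep : IndepFun G N μ) :
    μ {ω | (G ω : ℕ∞) < N ω} =
      (1 - ζ) * ∫⁻ ω, (↑(min (N ω) ((G ω : ℕ∞) + 1)) : ℝ≥0∞) ∂μ :=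
  reach_eq_one_sub_zeta_mul_expected_total_general μ ζ hζ1 N hN G hG hGeom hIndep
end

section
/- E[min(N, G+1)] = E[∑_{i=0}^{N−1} ζ^i], where for N = ∞ the sum is interpreted as ∑_{i=0}^{∞} ζ^i = 1/(1−ζ). (Random-variable core of the paper's final theorem: for every strategy, the expected undiscounted total reward in the augmented MDP equals the expected ζ-biased discounted reward in the product MDP, where the i-th accepting transition of a run earns reward ζ^i.) -/
open MeasureTheory ProbabilityTheory
open scoped ENNReal

/-!
Both sides are layer-cake sums over `i : ℕ`. Since `(n : ℝ≥0∞) = geomSum 1 n`, the integrand on the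
left is `∑ i, 1{i < N} 1{i ≤ G}` and the one on the right is `∑ i, ζ ^ i 1{i < N}`. By independence
the `i`-th term on the left has expectation `P(i < N) P(G ≥ i)`, and the geometric tail
`P(G ≥ i) = ζ ^ i` makes it equal to the `i`-th term on the right.
-/

lemma geomSum_one (n : ℕ∞) : geomSum 1 n = n := by
  induction n using ENat.recTopCoe <;> simp [geomSum]

lemma geomSum_eq_tsum (ζ : ℝ≥0∞) (n : ℕ∞) :
    geomSum ζ n = ∑' i : ℕ, if (i : ℕ∞) < n then ζ ^ i else 0 := by
  induction n using ENat.recTopCoe with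
  | top => simp [geomSum, ENNReal.tsum_geometric]
  | coe k =>
    rw [geomSum, if_neg (ENat.natCast_ne_top k), ENat.toNat_natCast, sum_eq_tsum_indicator]
    simp [Set.indicator_apply]

section

variable {Ω : Type*} [MeasurableSpace Ω]

lemma lintegral_geomSum (μ : Measure Ω) (ζ : ℝ≥0∞)
    {X : Ω → ℕ∞} (hX : Measurable X) :
    ∫⁻ ω, geomSum ζ (X ω) ∂μ = ∑' i : ℕ, ζ ^ i * μ {ω | (i : ℕ∞) < X ω} := by
  have hmeas (i : ℕ) : MeasurableSet {ω | (i : ℕ∞) < X ω} :=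
    hX (.of_discrete : MeasurableSet (Set.Ioi (i : ℕ∞)))
  simp_rw [geomSum_eq_tsum]
  rw [lintegral_tsum fun i =>
    (Measurable.ite (hmeas i) measurable_const measurable_const).aemeasurable]
  refine tsum_congr fun i => ?_
  rw [← lintegral_indicator_const (hmeas i)]
  simp only [Set.indicator_apply, Set.mem_ofPred_eq]

lemma measure_setOf_le_eq_pow {μ : Measure Ω}
    {ζ : ℝ≥0∞} (hζ : ζ < 1) {G : Ω → ℕ} (hG : Measurable G)
    (hGeom : ∀ k : ℕ, μ {ω | G ω = k} = (1 - ζ) * ζ ^ k) (i : ℕ) :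
    μ {ω | i ≤ G ω} = ζ ^ i := by
  have hunion : {ω | i ≤ G ω} = ⋃ k : ℕ, {ω | G ω = i + k} := by
    ext ω
    simp only [Set.mem_ofPred_eq, Set.mem_iUnion]
    exact ⟨fun h => ⟨G ω - i, by omega⟩, fun ⟨k, hk⟩ => by omega⟩
  have hdisj : Pairwise (Function.onFun Disjoint fun k : ℕ => {ω | G ω = i + k}) :=
    fun a b hab => Set.disjoint_left.mpr fun ω ha hb => hab (by simp_all)
  rw [hunion, measure_iUnion hdisj fun k => hG (measurableSet_singleton _)]
  simp_rw [hGeom, pow_add, mul_left_comm _ (ζ ^ i), ENNReal.tsum_mul_left,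
    ENNReal.tsum_geometric]
  rw [ENNReal.mul_inv_cancel (tsub_pos_of_lt hζ).ne' (by simp)]
  simp

end

theorem expected_total_eq_expected_discounted_general
    {Ω : Type*} [MeasurableSpace Ω] (μ : Measure Ω)
    (ζ : ℝ≥0∞) (hζ1 : ζ < 1)
    (N : Ω → ℕ∞) (hN : Measurable N)
    (G : Ω → ℕ) (hG : Measurable G)
    (hGeom : ∀ k : ℕ, μ {ω | G ω = k} = (1 - ζ) * ζ ^ k)
    (hIndep : IndepFun G N μ) :
    ∫⁻ ω, (↑(min (N ω) ((G ω : ℕ∞) + 1)) : ℝ≥0∞) ∂μ =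
      ∫⁻ ω, geomSum ζ (N ω) ∂μ := by
  have hsplit (i : ℕ) : μ {ω | (i : ℕ∞) < min (N ω) ((G ω : ℕ∞) + 1)} =
      ζ ^ i * μ {ω | (i : ℕ∞) < N ω} := by
    have hinter : {ω | (i : ℕ∞) < min (N ω) ((G ω : ℕ∞) + 1)} =
        G ⁻¹' Set.Ici i ∩ N ⁻¹' Set.Ioi (i : ℕ∞) := by
      ext ω
      simp [ENat.lt_add_one_iff, and_comm]
    rw [hinter, hIndep.measure_inter_preimage_eq_mul _ _ measurableSet_Ici .of_discrete]
    exact congrArg (· * _) (measure_setOf_le_eq_pow hζ1 hG hGeom i)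
  calc ∫⁻ ω, (↑(min (N ω) ((G ω : ℕ∞) + 1)) : ℝ≥0∞) ∂μ
      = ∫⁻ ω, geomSum 1 (min (N ω) ((G ω : ℕ∞) + 1)) ∂μ := by simp_rw [geomSum_one]
    _ = ∑' i : ℕ, ζ ^ i * μ {ω | (i : ℕ∞) < N ω} := by
      rw [lintegral_geomSum μ 1 (by fun_prop)]
      simp_rw [one_pow, one_mul, hsplit]
    _ = ∫⁻ ω, geomSum ζ (N ω) ∂μ := (lintegral_geomSum μ ζ hN).symm

/-- `E[min(N, G+1)] = E[∑_{i=0}^{N−1} ζ^i]`, where for `N = ∞` the sum is the full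
geometric series `1 / (1 − ζ)`. -/
theorem expected_total_eq_expected_discounted
    {Ω : Type*} [MeasurableSpace Ω] (μ : Measure Ω) [IsProbabilityMeasure μ]
    (ζ : ℝ≥0∞) (hζ0 : 0 < ζ) (hζ1 : ζ < 1)
    (N : Ω → ℕ∞) (hN : Measurable N)
    (G : Ω → ℕ) (hG : Measurable G)
    (hGeom : ∀ k : ℕ, μ {ω | G ω = k} = (1 - ζ) * ζ ^ k)
    (hIndep : IndepFun G N μ) :
    ∫⁻ ω, (↑(min (N ω) ((G ω : ℕ∞) + 1)) : ℝ≥0∞) ∂μ =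
      ∫⁻ ω, geomSum ζ (N ω) ∂μ :=
  expected_total_eq_expected_discounted_general μ ζ hζ1 N hN G hG hGeom hIndep
end

section
/- P(G < N) = 1 if and only if P(N = ∞) = 1. (Random-variable core of Theorem 1(2): for a fixed strategy, the chance of reaching the target t in the augmented MDP M^ζ is 1 if and only if the chance of satisfying the Büchi objective, i.e. seeing infinitely many accepting transitions, in the product MDP is 1.) -/
/-!
If `N` is finite with positive probability, then `N = k` with positive probability for some
`k : ℕ`. The geometric variable `G` charges every `k`, so by independence the event
`G = k = N`, on which `G < N` fails, has positive probability too.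
-/

open MeasureTheory ProbabilityTheory
open scoped ENNReal

theorem ProbabilityTheory.IndepFun.measure_preimage_eq_zero_of_measure_inter_eq_zero
    {Ω α β : Type*} [MeasurableSpace Ω] [MeasurableSpace α] [MeasurableSpace β]
    {μ : Measure Ω} {X : Ω → α} {Y : Ω → β} {s : Set α} {t : Set β}
    (hXY : IndepFun X Y μ) (hs : MeasurableSet s) (ht : MeasurableSet t)
    (hX : μ (X ⁻¹' s) ≠ 0) (hXY0 : μ (X ⁻¹' s ∩ Y ⁻¹' t) = 0) :
    μ (Y ⁻¹' t) = 0 := by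
  rw [hXY.measure_inter_preimage_eq_mul s t hs ht, mul_eq_zero] at hXY0
  exact hXY0.resolve_left hX

theorem ae_eq_top_of_forall_measure_preimage_coe_eq_zero
    {Ω : Type*} [MeasurableSpace Ω] {μ : Measure Ω} {N : Ω → ℕ∞}
    (hN : ∀ k : ℕ, μ (N ⁻¹' {(k : ℕ∞)}) = 0) :
    ∀ᵐ ω ∂μ, N ω = ⊤ := by
  have hne : ∀ k : ℕ, ∀ᵐ ω ∂μ, ω ∉ N ⁻¹' {(k : ℕ∞)} := fun k =>
    measure_eq_zero_iff_ae_notMem.mp (hN k)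
  filter_upwards [ae_all_iff.mpr hne] with ω hω
  exact ENat.eq_top_iff_forall_ne.mpr fun k hk => hω k hk.symm

theorem geometric_mass_ne_zero {ζ : ℝ≥0∞} (hζ0 : 0 < ζ) (hζ1 : ζ < 1) (k : ℕ) :
    (1 - ζ) * ζ ^ k ≠ 0 :=
  mul_ne_zero (tsub_pos_of_lt hζ1).ne' (pow_ne_zero k hζ0.ne')

/-- `P(G < N) = 1` if, and only if, `P(N = ∞) = 1`. -/
theorem reach_almost_sure_iff_buchi_almost_sure
    {Ω : Type*} [MeasurableSpace Ω] (μ : Measure Ω) [IsProbabilityMeasure μ]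
    (ζ : ℝ≥0∞) (hζ0 : 0 < ζ) (hζ1 : ζ < 1)
    (N : Ω → ℕ∞) (hN : Measurable N)
    (G : Ω → ℕ) (hG : Measurable G)
    (hGeom : ∀ k : ℕ, μ {ω | G ω = k} = (1 - ζ) * ζ ^ k)
    (hIndep : IndepFun G N μ) :
    μ {ω | (G ω : ℕ∞) < N ω} = 1 ↔ μ {ω | N ω = ⊤} = 1 := by
  have hlt : MeasurableSet {ω | (G ω : ℕ∞) < N ω} :=
    (measurable_from_top.comp hG |>.prodMk hN)
      (.of_discrete (s := {p : ℕ∞ × ℕ∞ | p.1 < p.2}))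
  have htop : MeasurableSet {ω | N ω = ⊤} := hN (measurableSet_singleton ⊤)
  rw [← measure_univ (μ := μ), ← ae_iff_measure_eq hlt.nullMeasurableSet,
    ← ae_iff_measure_eq htop.nullMeasurableSet]
  constructor
  · intro hreach
    refine ae_eq_top_of_forall_measure_preimage_coe_eq_zero fun k => ?_
    have hdiag : μ (G ⁻¹' {k} ∩ N ⁻¹' {(k : ℕ∞)}) = 0 :=
      measure_mono_null (fun ω ⟨(hGk : G ω = k), (hNk : N ω = k)⟩ => by simp [hGk, hNk])
        (ae_iff.mp hreach)
    exact hIndep.measure_preimage_eq_zero_of_measure_inter_eq_zero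
      (measurableSet_singleton k) (measurableSet_singleton _)
      (hGeom k ▸ geometric_mass_ne_zero hζ0 hζ1 k) hdiag
  · exact fun hbuchi => hbuchi.mono fun ω hω => hω ▸ WithTop.coe_lt_top _
end

section
/- There exists ζ₀ ∈ (0,1) such that for all ζ ∈ [ζ₀, 1) and all indices j: if j maximizes the function i ↦ 1 − E[ζ^{N_i}] over i ∈ {1,…,k}, then j also maximizes the function i ↦ P(N_i = ∞) over i ∈ {1,…,k}. (Finite-family core of Theorem 1(3) and Theorem 2(5): for ζ close enough to 1, a strategy maximizing the reachability value 1 − E[ζ^N] of the target in the augmented MDP also maximizes the probability P(N = ∞) of satisfying the Büchi objective; a finite MDP has finitely many relevant (positional) strategies, giving finitely many candidate distributions.) -/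
open MeasureTheory ProbabilityTheory Filter Set Topology
open scoped ENNReal

/-!
As `ζ ↑ 1`, the value `1 - E[ζ^{N_i}]` decreases to `1 - E[1^{N_i}] = P(N_i = ∞)`
(dominated convergence), so it approaches `P(N_i = ∞)` from above. If `P(N_j = ∞) < P(N_i = ∞)`,
then close enough to `1` the value of `j` has dropped below `P(N_i = ∞)`, which the value of `i`
never does, so `j` is not a maximizer; finitely many pairs `(i, j)` give a common threshold.
-/

theorem eventually_forall_le_of_tendsto {ι α β : Type*} [Finite ι] [LinearOrder β]
    [TopologicalSpace β] [ClosedIciTopology β] {l : Filter α} {f : ι → α → β} {c : ι → β}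
    (hf : ∀ i, Tendsto (f i) l (𝓝 (c i))) (hle : ∀ i, ∀ᶠ x in l, c i ≤ f i x) :
    ∀ᶠ x in l, ∀ j, (∀ i, f i x ≤ f j x) → ∀ i, c i ≤ c j := by
  have hpair : ∀ i j, ∀ᶠ x in l, c j < c i → f j x < f i x := by
    intro i j
    by_cases hc : c j < c i
    · filter_upwards [(hf j).eventually_lt_const hc, hle i] with x hj hi
      exact fun _ => hj.trans_le hi
    · exact Eventually.of_forall fun _ h => absurd h hc
  filter_upwards [eventually_all.2 fun i => eventually_all.2 (hpair i)] with x hx j hj i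
  by_contra! hc
  exact (hj i).not_gt (hx i j hc)

theorem exists_forall_Ico_of_eventually_nhdsLT {α : Type*} [LinearOrder α] [TopologicalSpace α]
    [OrderTopology α] [DenselyOrdered α] {a b : α} (hb : b < a) {p : α → Prop}
    (hp : ∀ᶠ x in 𝓝[<] a, p x) : ∃ x₀, b < x₀ ∧ x₀ < a ∧ ∀ x, x₀ ≤ x → x < a → p x := by
  obtain ⟨l, hl, hsub⟩ := (mem_nhdsLT_iff_exists_Ioo_subset' hb).1 hp
  obtain ⟨x₀, hx₀, hx₀a⟩ := exists_between (max_lt hl hb)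
  exact ⟨x₀, (le_max_right l b).trans_lt hx₀, hx₀a, fun x hx hxa =>
    hsub ⟨(le_max_left l b).trans_lt (hx₀.trans_le hx), hxa⟩⟩

theorem continuous_epow (n : ℕ∞) : Continuous fun ζ => epow ζ n := by
  unfold epow
  split
  · exact continuous_const
  · exact ENNReal.continuous_pow _

theorem epow_le_epow_left {ζ₁ ζ₂ : ℝ≥0∞} (h : ζ₁ ≤ ζ₂) (n : ℕ∞) : epow ζ₁ n ≤ epow ζ₂ n := by
  unfold epow
  split
  · exact le_rfl
  · exact pow_le_pow_left' h _

theorem epow_le_one {ζ : ℝ≥0∞} (hζ : ζ ≤ 1) (n : ℕ∞) : epow ζ n ≤ 1 := by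
  unfold epow
  split
  · exact zero_le_one
  · exact pow_le_one' hζ _

section Lintegral

variable {Ω : Type*} [MeasurableSpace Ω] {μ : Measure Ω} {X : Ω → ℕ∞}

theorem lintegral_epow_one (hX : Measurable X) :
    ∫⁻ ω, epow 1 (X ω) ∂μ = μ {ω | X ω ≠ ⊤} := by
  have hs : MeasurableSet {ω | X ω ≠ ⊤} := hX (measurableSet_singleton ⊤).compl
  rw [← lintegral_indicator_one hs]
  congr 1 with ω
  by_cases h : X ω = ⊤ <;> simp [epow, h]

theorem tendsto_lintegral_epow_nhdsLT_one [IsFiniteMeasure μ] (hX : Measurable X) :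
    Tendsto (fun ζ => ∫⁻ ω, epow ζ (X ω) ∂μ) (𝓝[<] 1) (𝓝 (μ {ω | X ω ≠ ⊤})) := by
  rw [← lintegral_epow_one hX]
  refine tendsto_lintegral_filter_of_dominated_convergence 1
    (Eventually.of_forall fun ζ => (measurable_of_countable (epow ζ)).comp hX) ?_
    (by simp [measure_ne_top]) (ae_of_all _ fun ω =>
      ((continuous_epow (X ω)).tendsto 1).mono_left nhdsWithin_le_nhds)
  filter_upwards [self_mem_nhdsWithin] with ζ hζ
  exact ae_of_all _ fun ω => epow_le_one (le_of_lt hζ) _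

variable [IsProbabilityMeasure μ]

theorem one_sub_lintegral_epow_one (hX : Measurable X) :
    1 - ∫⁻ ω, epow 1 (X ω) ∂μ = μ {ω | X ω = ⊤} := by
  have hs : MeasurableSet {ω | X ω = ⊤} := hX (measurableSet_singleton ⊤)
  have hcompl : μ {ω | X ω ≠ ⊤} = 1 - μ {ω | X ω = ⊤} := prob_compl_eq_one_sub hs
  rw [lintegral_epow_one hX, hcompl, ENNReal.sub_sub_cancel ENNReal.one_ne_top prob_le_one]

theorem tendsto_one_sub_lintegral_epow_nhdsLT_one (hX : Measurable X) :
    Tendsto (fun ζ => 1 - ∫⁻ ω, epow ζ (X ω) ∂μ) (𝓝[<] 1) (𝓝 (μ {ω | X ω = ⊤})) := by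
  rw [← one_sub_lintegral_epow_one hX, lintegral_epow_one hX]
  exact ((ENNReal.continuous_sub_left ENNReal.one_ne_top).tendsto _).comp
    (tendsto_lintegral_epow_nhdsLT_one hX)

theorem measure_eq_top_le_one_sub_lintegral_epow (hX : Measurable X) {ζ : ℝ≥0∞} (hζ : ζ ≤ 1) :
    μ {ω | X ω = ⊤} ≤ 1 - ∫⁻ ω, epow ζ (X ω) ∂μ := by
  rw [← one_sub_lintegral_epow_one hX]
  exact tsub_le_tsub_left (lintegral_mono fun ω => epow_le_epow_left hζ _) 1

end Lintegral

theorem exists_zeta_threshold_general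
    {Ω : Type*} [MeasurableSpace Ω] (μ : Measure Ω) [IsProbabilityMeasure μ]
    (k : ℕ)
    (N : Fin k → Ω → ℕ∞) (hN : ∀ i, Measurable (N i)) :
    ∃ ζ₀ : ℝ≥0∞, 0 < ζ₀ ∧ ζ₀ < 1 ∧
      ∀ ζ : ℝ≥0∞, ζ₀ ≤ ζ → ζ < 1 →
        ∀ j : Fin k,
          (∀ i : Fin k,
            1 - ∫⁻ ω, epow ζ (N i ω) ∂μ ≤ 1 - ∫⁻ ω, epow ζ (N j ω) ∂μ) →
          ∀ i : Fin k, μ {ω | N i ω = ⊤} ≤ μ {ω | N j ω = ⊤} := by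
  refine exists_forall_Ico_of_eventually_nhdsLT zero_lt_one
    (eventually_forall_le_of_tendsto (fun i => tendsto_one_sub_lintegral_epow_nhdsLT_one (hN i))
      fun i => ?_)
  filter_upwards [self_mem_nhdsWithin] with ζ hζ
  exact measure_eq_top_le_one_sub_lintegral_epow (hN i) (le_of_lt hζ)

/-- For a finite family `N_1, …, N_k` there is a threshold `ζ₀ ∈ (0,1)` such that for all
`ζ ∈ [ζ₀, 1)`, any index maximizing `i ↦ 1 − E[ζ^{N_i}]` also maximizes `i ↦ P(N_i = ∞)`. -/
theorem exists_zeta_threshold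
    {Ω : Type*} [MeasurableSpace Ω] (μ : Measure Ω) [IsProbabilityMeasure μ]
    (k : ℕ) (hk : 1 ≤ k)
    (N : Fin k → Ω → ℕ∞) (hN : ∀ i, Measurable (N i)) :
    ∃ ζ₀ : ℝ≥0∞, 0 < ζ₀ ∧ ζ₀ < 1 ∧
      ∀ ζ : ℝ≥0∞, ζ₀ ≤ ζ → ζ < 1 →
        ∀ j : Fin k,
          (∀ i : Fin k,
            1 - ∫⁻ ω, epow ζ (N i ω) ∂μ ≤ 1 - ∫⁻ ω, epow ζ (N j ω) ∂μ) →
          ∀ i : Fin k, μ {ω | N i ω = ⊤} ≤ μ {ω | N j ω = ⊤} :=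
  exists_zeta_threshold_general μ k N hN
end
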